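/- Let A : ℝ^{n×m}, y ∈ ℝ^n, α > 0 and ε > 0. Let x* be the unique minimizer over the nonnegative cone C = {x ∈ ℝ^m : x ≥ 0} of J(x) = ‖Ax − y‖₁ + (α/2)‖x‖₂², and let x_ε be the unique minimizer over C of the smoothed functional J_ε(x) = ‖Ax − y‖_{1,ε} + (α/2)‖x‖₂². Then ‖x_ε − x*‖₂² ≤ 2·n·ε / α; in particular, x_ε converges to x* as ε → 0. -/

import Mathlib

/-! Both functionals are `α`-strongly convex on the convex cone `C`: they are sums of convex
functions of the affine map `x ↦ Ax − y` (the smoothed absolute value `√(t² + ε²) = ‖t + εi‖`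
is the norm of an affine function of `t`) plus `(α/2)‖x‖²`. Hence each grows at least like
`(α/4)‖x − x_min‖²` away from its minimizer over `C`. Adding the two growth inequalities and using
`J ≤ J_ε ≤ J + nε` gives `(α/2)‖x_ε − x*‖² ≤ nε`. -/

open Set Complex Matrix

theorem convexOn_sqrt_sq_add_sq (c : ℝ) : ConvexOn ℝ univ fun t : ℝ => √(t ^ 2 + c ^ 2) := by
  refine ⟨convex_univ, fun s _ t _ a b ha hb hab => ?_⟩
  have hab' : (a : ℂ) + b = 1 := by exact_mod_cast hab
  have hsplit : ((a * s + b * t : ℝ) : ℂ) + c * I =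
      a • ((s : ℂ) + c * I) + b • ((t : ℂ) + c * I) := by
    simp only [Complex.real_smul]; push_cast; linear_combination (-(c * I)) * hab'
  simp only [← norm_add_mul_I, smul_eq_mul, hsplit]
  refine (norm_add_le _ _).trans_eq ?_
  rw [norm_smul, norm_smul, Real.norm_of_nonneg ha, Real.norm_of_nonneg hb]

theorem sqrt_sq_add_sq_le_abs_add_abs (a c : ℝ) : √(a ^ 2 + c ^ 2) ≤ |a| + |c| := by
  rw [← norm_add_mul_I]
  simpa using norm_add_le (a : ℂ) (c * I)

theorem sum_abs_le_sum_sqrt_sq_add_sq {ι : Type*} [Fintype ι] (v : ι → ℝ) (c : ℝ) :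
    ∑ i, |v i| ≤ ∑ i, √(v i ^ 2 + c ^ 2) :=
  Finset.sum_le_sum fun _ _ => Real.abs_le_sqrt (le_add_of_nonneg_right (sq_nonneg c))

theorem sum_sqrt_sq_add_sq_le_sum_abs_add {ι : Type*} [Fintype ι] (v : ι → ℝ) (c : ℝ) :
    ∑ i, √(v i ^ 2 + c ^ 2) ≤ ∑ i, |v i| + Fintype.card ι * |c| := by
  simpa [Finset.sum_add_distrib] using
    Finset.sum_le_sum fun i (_ : i ∈ Finset.univ) => sqrt_sq_add_sq_le_abs_add_abs (v i) c

theorem convexOn_sum_comp_sub {E ι : Type*} [AddCommGroup E] [Module ℝ E] [Fintype ι]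
    {φ : ℝ → ℝ} (hφ : ConvexOn ℝ univ φ) (L : E →ₗ[ℝ] ι → ℝ) (b : ι → ℝ) :
    ConvexOn ℝ univ fun x => ∑ i, φ (L x i - b i) := by
  refine ⟨convex_univ, fun x _ z _ u v hu hv huv => ?_⟩
  have hsplit : ∀ i, L (u • x + v • z) i - b i = u • (L x i - b i) + v • (L z i - b i) := by
    intro i
    simp only [map_add, map_smul, Pi.add_apply, Pi.smul_apply, smul_eq_mul]
    linear_combination b i * huv
  simp only [hsplit, smul_eq_mul, Finset.mul_sum, ← Finset.sum_add_distrib]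
  exact Finset.sum_le_sum fun i _ => hφ.2 trivial trivial hu hv huv

theorem ConvexOn.strongConvexOn_add_sq_norm {E : Type*} [NormedAddCommGroup E]
    [InnerProductSpace ℝ E] {s : Set E} {g : E → ℝ} (hg : ConvexOn ℝ s g) (m : ℝ) :
    StrongConvexOn s m fun x => g x + m / 2 * ‖x‖ ^ 2 := by
  rw [strongConvexOn_iff_convex]
  simpa only [add_sub_cancel_right] using hg

section

variable {E : Type*} [NormedAddCommGroup E] [NormedSpace ℝ E] {s : Set E} {f g : E → ℝ}
  {m δ : ℝ} {x y : E}

-- Only the midpoint inequality is used, hence `m / 4` rather than the sharp `m / 2`.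
theorem StrongConvexOn.add_norm_sub_sq_le_of_isMinOn (hf : StrongConvexOn s m f)
    (hmin : IsMinOn f s x) (hx : x ∈ s) (hy : y ∈ s) : f x + m / 4 * ‖y - x‖ ^ 2 ≤ f y := by
  have half : (0 : ℝ) ≤ 1 / 2 := by norm_num
  have hmid := hf.2 hx hy half half (by norm_num)
  have hle := isMinOn_iff.1 hmin _ (hf.1 hx hy half half (by norm_num))
  rw [norm_sub_rev] at hmid
  simp only [smul_eq_mul] at hmid
  linarith

theorem StrongConvexOn.norm_sub_sq_le_of_isMinOn (hf : StrongConvexOn s m f)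
    (hg : StrongConvexOn s m g) (hfg : ∀ z ∈ s, f z ≤ g z) (hgf : ∀ z ∈ s, g z ≤ f z + δ)
    (hfx : IsMinOn f s x) (hgy : IsMinOn g s y) (hx : x ∈ s) (hy : y ∈ s) :
    m / 2 * ‖x - y‖ ^ 2 ≤ δ := by
  have h₁ := hf.add_norm_sub_sq_le_of_isMinOn hfx hx hy
  have h₂ := hg.add_norm_sub_sq_le_of_isMinOn hgy hy hx
  rw [norm_sub_rev] at h₁
  linarith [hfg y hy, hgf x hx]

end

theorem strongConvexOn_sum_comp_mulVec_sub_add_sq_norm {ι κ : Type*} [Fintype ι] [Fintype κ]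
    {φ : ℝ → ℝ} (hφ : ConvexOn ℝ univ φ) (A : Matrix ι κ ℝ) (y : ι → ℝ)
    {s : Set (EuclideanSpace ℝ κ)} (hs : Convex ℝ s) (α : ℝ) :
    StrongConvexOn s α fun x => ∑ i, φ ((A *ᵥ x.ofLp - y) i) + α / 2 * ‖x‖ ^ 2 :=
  ((convexOn_sum_comp_sub hφ
    ((Matrix.mulVecLin A).comp (WithLp.linearEquiv 2 ℝ (κ → ℝ)).toLinearMap) y).subset
      (subset_univ s) hs).strongConvexOn_add_sq_norm α

/-- Quantitative error estimate for smoothing: if `x*` minimizes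
`J(x) = ‖Ax − y‖₁ + (α/2)‖x‖₂²` over the nonnegative cone and `x_ε` minimizes the
smoothed functional `J_ε(x) = ‖Ax − y‖_{1,ε} + (α/2)‖x‖₂²` over the same cone, then
`‖x_ε − x*‖₂² ≤ 2·n·ε / α`. -/
theorem smoothing_error_estimate
    (n m : ℕ) (A : Matrix (Fin n) (Fin m) ℝ) (y : Fin n → ℝ)
    (α ε : ℝ) (hα : 0 < α) (hε : 0 < ε)
    (J Jε : (Fin m → ℝ) → ℝ)
    (hJ : ∀ x, J x = (∑ i, |(A.mulVec x - y) i|) + α / 2 * ∑ j, (x j) ^ 2)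
    (hJε : ∀ x, Jε x =
      (∑ i, Real.sqrt (((A.mulVec x - y) i) ^ 2 + ε ^ 2)) + α / 2 * ∑ j, (x j) ^ 2)
    (xstar xε : Fin m → ℝ)
    (hxstar_mem : ∀ j, 0 ≤ xstar j)
    (hxstar_min : ∀ x : Fin m → ℝ, (∀ j, 0 ≤ x j) → J xstar ≤ J x)
    (hxε_mem : ∀ j, 0 ≤ xε j)
    (hxε_min : ∀ x : Fin m → ℝ, (∀ j, 0 ≤ x j) → Jε xε ≤ Jε x) :
    (∑ j, (xε j - xstar j) ^ 2) ≤ 2 * n * ε / α := by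
  -- Strong convexity refers to the Euclidean norm; `Fin m → ℝ` carries the sup norm.
  let C : Set (EuclideanSpace ℝ (Fin m)) := {x | ∀ j, 0 ≤ x j}
  have hC : Convex ℝ C := fun x hx z hz a b ha hb _ j => by
    simpa using add_nonneg (mul_nonneg ha (hx j)) (mul_nonneg hb (hz j))
  have hmin : ∀ {K : (Fin m → ℝ) → ℝ} {φ : ℝ → ℝ} {v},
      (∀ x, K x = ∑ i, φ ((A *ᵥ x - y) i) + α / 2 * ∑ j, x j ^ 2) →
      (∀ x : Fin m → ℝ, (∀ j, 0 ≤ x j) → K v ≤ K x) →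
      IsMinOn (fun x => ∑ i, φ ((A *ᵥ x.ofLp - y) i) + α / 2 * ‖x‖ ^ 2) C (WithLp.toLp 2 v) :=
    fun hK h => isMinOn_iff.2 fun x hx => by
      simpa only [hK, EuclideanSpace.real_norm_sq_eq] using h _ hx
  have hF := strongConvexOn_sum_comp_mulVec_sub_add_sq_norm
    (convexOn_norm (E := ℝ) convex_univ) A y hC α
  have hG := strongConvexOn_sum_comp_mulVec_sub_add_sq_norm (convexOn_sqrt_sq_add_sq ε) A y hC α
  have hxstar := hmin (by simpa only [Real.norm_eq_abs] using hJ) hxstar_min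
  have hxε := hmin (φ := fun t => √(t ^ 2 + ε ^ 2)) hJε hxε_min
  have hdist := hF.norm_sub_sq_le_of_isMinOn hG
    (fun x _ => by simpa using sum_abs_le_sum_sqrt_sq_add_sq (A *ᵥ x.ofLp - y) ε)
    (fun x _ => by simpa [abs_of_pos hε, add_right_comm]
      using sum_sqrt_sq_add_sq_le_sum_abs_add (A *ᵥ x.ofLp - y) ε)
    hxstar hxε hxstar_mem hxε_mem
  rw [norm_sub_rev, EuclideanSpace.real_norm_sq_eq] at hdist
  simp only [WithLp.ofLp_sub, Pi.sub_apply] at hdist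
  rw [le_div_iff₀ hα]
  linarith
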